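/- Let E ⊆ ℝ be a set with distinct sums of pairs, let λ1, ..., λn ∈ E be pairwise distinct, let c1, ..., cn be complex numbers, and let f(t) = Σ_{j=1}^{n} c_j·e^{i·λ_j·t}. Then limsup_{T→+∞} (1/(2T))·∫_{−T}^{T} |f(t)|⁴ dt ≤ 2·(Σ_{j=1}^{n} |c_j|²)². Consequently, the Besicovitch B⁴-seminorm of f is at most 2^{1/4} times its B²-seminorm. -/

import Mathlib

open Filter Complex

/-- A set `E ⊆ ℝ` has distinct sums of pairs. -/
def DistinctSumsOfPairs (E : Set ℝ) : Prop :=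
  ∀ l₁ ∈ E, ∀ l₂ ∈ E, ∀ l₃ ∈ E, ∀ l₄ ∈ E,
    l₁ + l₂ = l₃ + l₄ → (l₁ = l₃ ∧ l₂ = l₄) ∨ (l₁ = l₄ ∧ l₂ = l₃)

/-- The Besicovitch `B^p`-seminorm of `f : ℝ → ℂ`. -/
noncomputable def besicovitchSeminorm (p : ℝ) (f : ℝ → ℂ) : ℝ :=
  Filter.limsup
    (fun T : ℝ => ((1 / (2 * T)) * ∫ t in (-T)..T, ‖f t‖ ^ p) ^ (1 / p))
    Filter.atTop

/-!
For a finite exponential sum `g t = ∑ i, b i * exp (I * ν i * t)`, the averages of `‖g‖ ^ 2` over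
`[-T, T]` converge to `∑_{ν i = ν k} b i * conj (b k)`, because `exp (I * μ * t)` averages to `0`
unless `μ = 0`. If each frequency is taken by at most `m` indices, AM-GM bounds this by
`m * ∑ i, ‖b i‖ ^ 2`. Apply this to `f ^ 2`, whose frequencies are the pair sums `l j + l k`:
distinct sums of pairs means each of them comes only from `(j, k)` and `(k, j)`, so the mean of
`‖f‖ ^ 4` is at most `2 * (∑ j, ‖c j‖ ^ 2) ^ 2`, while injectivity of `l` makes the mean of
`‖f‖ ^ 2` exactly `∑ j, ‖c j‖ ^ 2`.
-/

open ComplexConjugate Finset Topology Function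

noncomputable def expSum {ι : Type*} [Fintype ι] (b : ι → ℂ) (ν : ι → ℝ) (t : ℝ) : ℂ :=
  ∑ i, b i * exp (I * ν i * t)

noncomputable def coincidenceSum {ι α : Type*} [Fintype ι] [DecidableEq α] (b : ι → ℂ)
    (ν : ι → α) : ℂ :=
  ∑ p : ι × ι, if ν p.1 = ν p.2 then b p.1 * conj (b p.2) else 0

section ExpSum

variable {ι κ : Type*} [Fintype ι] [Fintype κ]

theorem expSum_mul_expSum (a : ι → ℂ) (b : κ → ℂ) (μ : ι → ℝ) (ν : κ → ℝ) (t : ℝ) :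
    expSum a μ t * expSum b ν t =
      expSum (fun p : ι × κ => a p.1 * b p.2) (fun p => μ p.1 + ν p.2) t := by
  simp only [expSum, sum_mul_sum, Fintype.sum_prod_type]
  refine sum_congr rfl fun i _ => sum_congr rfl fun k _ => ?_
  push_cast
  rw [mul_add, add_mul, exp_add]
  ring

theorem conj_expSum (b : ι → ℂ) (ν : ι → ℝ) (t : ℝ) :
    conj (expSum b ν t) = expSum (conj ∘ b) (-ν) t := by
  simp only [expSum, map_sum, map_mul, ← exp_conj, conj_I, conj_ofReal, Function.comp_apply,
    Pi.neg_apply, ofReal_neg]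
  refine sum_congr rfl fun i _ => ?_
  ring_nf

theorem norm_integral_exp_mul_I_le {μ : ℝ} (hμ : μ ≠ 0) (T : ℝ) :
    ‖∫ t in (-T)..T, exp (I * μ * t)‖ ≤ 2 / |μ| := by
  have hIμ : I * μ ≠ 0 := mul_ne_zero I_ne_zero (ofReal_ne_zero.mpr hμ)
  have hnorm : ∀ s : ℝ, ‖exp (I * μ * s)‖ = 1 := fun s => by
    rw [show I * μ * s = ((μ * s : ℝ) : ℂ) * I by push_cast; ring, norm_exp_ofReal_mul_I]
  rw [integral_exp_mul_complex hIμ, norm_div, norm_mul, norm_I, norm_real, one_mul,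
    Real.norm_eq_abs]
  gcongr
  calc _ ≤ ‖exp (I * μ * T)‖ + ‖exp (I * μ * (-T : ℝ))‖ := norm_sub_le _ _
    _ = 2 := by rw [hnorm, hnorm]; norm_num

theorem tendsto_average_exp_mul_I (μ : ℝ) :
    Tendsto (fun T : ℝ => (1 / (2 * T) : ℝ) • ∫ t in (-T)..T, exp (I * μ * t)) atTop
      (𝓝 (if μ = 0 then 1 else 0)) := by
  split_ifs with hμ
  · refine tendsto_const_nhds.congr' ?_
    filter_upwards [eventually_gt_atTop 0] with T hT
    simp only [hμ, ofReal_zero, mul_zero, zero_mul, exp_zero, intervalIntegral.integral_const,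
      sub_neg_eq_add, smul_smul]
    field_simp
    norm_num
  · have hdecay : Tendsto (fun T : ℝ => (1 / (2 * T)) * (2 / |μ|)) atTop (𝓝 0) := by
      simpa using ((tendsto_id.const_mul_atTop two_pos).inv_tendsto_atTop).mul_const (2 / |μ|)
    refine squeeze_zero_norm' ?_ hdecay
    filter_upwards [eventually_gt_atTop 0] with T hT
    rw [norm_smul, Real.norm_of_nonneg (by positivity)]
    gcongr
    exact norm_integral_exp_mul_I_le hμ T

theorem tendsto_average_expSum (b : ι → ℂ) (ν : ι → ℝ) :
    Tendsto (fun T : ℝ => (1 / (2 * T) : ℝ) • ∫ t in (-T)..T, expSum b ν t) atTop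
      (𝓝 (∑ i, if ν i = 0 then b i else 0)) := by
  have hsum : ∀ T : ℝ, (1 / (2 * T) : ℝ) • ∫ t in (-T)..T, expSum b ν t =
      ∑ i, b i * (1 / (2 * T) : ℝ) • ∫ t in (-T)..T, exp (I * ν i * t) := fun T => by
    unfold expSum
    rw [intervalIntegral.integral_finsetSum fun i _ => by
      exact (by fun_prop : Continuous fun t : ℝ => b i * exp (I * ν i * t)).intervalIntegrable _ _]
    simp only [intervalIntegral.integral_const_mul, smul_sum, mul_smul_comm]
  simp only [hsum]
  refine tendsto_finsetSum _ fun i _ => ?_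
  simpa using (tendsto_average_exp_mul_I (ν i)).const_mul (b i)

theorem norm_expSum_pow_four (b : ι → ℂ) (ν : ι → ℝ) (t : ℝ) :
    ‖expSum b ν t‖ ^ 4 =
      ‖expSum (fun p : ι × ι => b p.1 * b p.2) (fun p => ν p.1 + ν p.2) t‖ ^ 2 := by
  rw [← expSum_mul_expSum, norm_mul, ← sq, ← pow_mul]

theorem tendsto_average_norm_sq_expSum (b : ι → ℂ) (ν : ι → ℝ) :
    Tendsto (fun T : ℝ => 1 / (2 * T) * ∫ t in (-T)..T, ‖expSum b ν t‖ ^ 2) atTop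
      (𝓝 (coincidenceSum b ν).re) := by
  have hsq : ∀ t, (‖expSum b ν t‖ ^ 2 : ℂ) =
      expSum (fun p : ι × ι => b p.1 * conj (b p.2)) (fun p => ν p.1 + (-ν) p.2) t := fun t => by
    rw [← ofReal_pow, ← normSq_eq_norm_sq, ← mul_conj, conj_expSum]
    exact expSum_mul_expSum _ _ _ _ t
  have hre : ∀ T : ℝ, 1 / (2 * T) * ∫ t in (-T)..T, ‖expSum b ν t‖ ^ 2 =
      ((1 / (2 * T) : ℝ) • ∫ t in (-T)..T,
        expSum (fun p : ι × ι => b p.1 * conj (b p.2)) (fun p => ν p.1 + (-ν) p.2) t).re :=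
    fun T => by
      simp only [← hsq, ← ofReal_pow, intervalIntegral.integral_ofReal, real_smul, ← ofReal_mul,
        ofReal_re]
  simp only [hre]
  refine (continuous_re.tendsto _).comp ?_
  simpa only [coincidenceSum, Pi.neg_apply, ← sub_eq_add_neg, sub_eq_zero] using
    tendsto_average_expSum (fun p : ι × ι => b p.1 * conj (b p.2)) (fun p => ν p.1 + (-ν) p.2)

theorem re_coincidenceSum_nonneg (b : ι → ℂ) (ν : ι → ℝ) : 0 ≤ (coincidenceSum b ν).re :=
  ge_of_tendsto (tendsto_average_norm_sq_expSum b ν) <| (eventually_ge_atTop 0).mono fun T hT =>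
    mul_nonneg (by positivity) <|
      intervalIntegral.integral_nonneg (by linarith) fun _ _ => by positivity

theorem coincidenceSum_of_injective [DecidableEq ι] (b : ι → ℂ) {ν : ι → ℝ} (hν : Injective ν) :
    coincidenceSum b ν = ∑ i, ‖b i‖ ^ 2 := by
  simp [coincidenceSum, hν.eq_iff, Fintype.sum_prod_type, mul_conj, normSq_eq_norm_sq]

end ExpSum

theorem re_coincidenceSum_le {ι α : Type*} [Fintype ι] [DecidableEq α] (b : ι → ℂ) (ν : ι → α)
    {m : ℕ} (hm : ∀ i, #{k | ν k = ν i} ≤ m) :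
    (coincidenceSum b ν).re ≤ m * ∑ i, ‖b i‖ ^ 2 := by
  have hamgm : ∀ p : ι × ι, (b p.1 * conj (b p.2)).re ≤ (‖b p.1‖ ^ 2 + ‖b p.2‖ ^ 2) / 2 :=
    fun p => by
      have := two_mul_le_add_sq ‖b p.1‖ ‖b p.2‖
      have := (re_le_norm (b p.1 * conj (b p.2))).trans_eq (by rw [norm_mul, RCLike.norm_conj])
      linarith
  have hswap : ∑ p : ι × ι, (if ν p.1 = ν p.2 then ‖b p.2‖ ^ 2 else 0) =
      ∑ p : ι × ι, (if ν p.1 = ν p.2 then ‖b p.1‖ ^ 2 else 0) :=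
    Fintype.sum_equiv (Equiv.prodComm ι ι) _ _ fun p => by
      simp only [Equiv.prodComm_apply, Prod.fst_swap, Prod.snd_swap, eq_comm]
  calc (coincidenceSum b ν).re
      = ∑ p : ι × ι, if ν p.1 = ν p.2 then (b p.1 * conj (b p.2)).re else 0 := by
        simp only [coincidenceSum, re_sum, apply_ite re, zero_re]
    _ ≤ ∑ p : ι × ι, if ν p.1 = ν p.2 then (‖b p.1‖ ^ 2 + ‖b p.2‖ ^ 2) / 2 else 0 := by
        gcongr with p
        split_ifs
        exacts [hamgm p, le_rfl]
    _ = ∑ p : ι × ι, if ν p.1 = ν p.2 then ‖b p.1‖ ^ 2 else 0 := by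
        have hsplit : ∀ p : ι × ι, (if ν p.1 = ν p.2 then (‖b p.1‖ ^ 2 + ‖b p.2‖ ^ 2) / 2 else 0) =
            ((if ν p.1 = ν p.2 then ‖b p.1‖ ^ 2 else 0) +
              (if ν p.1 = ν p.2 then ‖b p.2‖ ^ 2 else 0)) / 2 := fun p => by
          split_ifs <;> ring
        rw [sum_congr rfl fun p _ => hsplit p, ← sum_div, sum_add_distrib, hswap]
        ring
    _ = ∑ i, #{k | ν k = ν i} * ‖b i‖ ^ 2 := by
        rw [Fintype.sum_prod_type]
        refine sum_congr rfl fun i _ => ?_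
        simp only [← sum_filter, sum_const, nsmul_eq_mul, eq_comm (b := ν i)]
    _ ≤ m * ∑ i, ‖b i‖ ^ 2 := by
        rw [mul_sum]
        gcongr with i
        exact_mod_cast hm i

theorem card_filter_add_eq_le_two {ι : Type*} [Fintype ι] [DecidableEq ι] {E : Set ℝ}
    (hE : DistinctSumsOfPairs E) {l : ι → ℝ} (hl : Injective l) (hlE : ∀ i, l i ∈ E)
    (p : ι × ι) : #{q : ι × ι | l q.1 + l q.2 = l p.1 + l p.2} ≤ 2 := by
  refine (card_le_card fun q hq => ?_).trans (card_le_two (a := p) (b := p.swap))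
  rw [mem_filter] at hq
  rcases hE _ (hlE q.1) _ (hlE q.2) _ (hlE p.1) _ (hlE p.2) hq.2 with ⟨h₁, h₂⟩ | ⟨h₁, h₂⟩ <;>
    simp [Prod.ext_iff, hl h₁, hl h₂]

theorem besicovitchSeminorm_eq_of_tendsto {f : ℝ → ℂ} {p L : ℝ} (hp : 0 ≤ p)
    (h : Tendsto (fun T : ℝ => 1 / (2 * T) * ∫ t in (-T)..T, ‖f t‖ ^ p) atTop (𝓝 L)) :
    besicovitchSeminorm p f = L ^ (1 / p) :=
  (h.rpow_const (Or.inr (one_div_nonneg.mpr hp))).limsup_eq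

theorem dsp_B4_estimate (E : Set ℝ) (hE : DistinctSumsOfPairs E)
    (n : ℕ) (l : Fin n → ℝ) (hl : Function.Injective l) (hlE : ∀ j, l j ∈ E)
    (c : Fin n → ℂ) (f : ℝ → ℂ)
    (hf : ∀ t : ℝ, f t = ∑ j : Fin n, c j * Complex.exp (Complex.I * (l j : ℂ) * t)) :
    Filter.limsup
      (fun T : ℝ => (1 / (2 * T)) * ∫ t in (-T)..T, ‖f t‖ ^ 4)
      Filter.atTop ≤ 2 * (∑ j : Fin n, ‖c j‖ ^ 2) ^ 2 ∧
    besicovitchSeminorm 4 f ≤ 2 ^ ((1 : ℝ) / 4) * besicovitchSeminorm 2 f := by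
  set M := ∑ j : Fin n, ‖c j‖ ^ 2
  obtain rfl : f = expSum c l := funext hf
  set b := fun p : Fin n × Fin n => c p.1 * c p.2
  set ν := fun p : Fin n × Fin n => l p.1 + l p.2
  have h4 : Tendsto (fun T : ℝ => 1 / (2 * T) * ∫ t in (-T)..T, ‖expSum c l t‖ ^ 4) atTop
      (𝓝 (coincidenceSum b ν).re) := by
    simpa only [norm_expSum_pow_four] using tendsto_average_norm_sq_expSum b ν
  have h2 := tendsto_average_norm_sq_expSum c l
  rw [coincidenceSum_of_injective c hl, ofReal_re] at h2
  have hL : (coincidenceSum b ν).re ≤ 2 * M ^ 2 := calc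
    _ ≤ (2 : ℕ) * ∑ p, ‖b p‖ ^ 2 :=
      re_coincidenceSum_le b ν (card_filter_add_eq_le_two hE hl hlE)
    _ = 2 * M ^ 2 := by
      simp only [b, M, norm_mul, mul_pow, Fintype.sum_prod_type, ← mul_sum, ← sum_mul]
      push_cast
      ring
  refine ⟨h4.limsup_eq ▸ hL, ?_⟩
  rw [besicovitchSeminorm_eq_of_tendsto (by norm_num) (by simpa only [Real.rpow_ofNat] using h4),
    besicovitchSeminorm_eq_of_tendsto (by norm_num) (by simpa only [Real.rpow_ofNat] using h2)]
  calc (coincidenceSum b ν).re ^ (1 / 4 : ℝ) ≤ (2 * M ^ 2) ^ (1 / 4 : ℝ) :=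
        Real.rpow_le_rpow (re_coincidenceSum_nonneg b ν) hL (by norm_num)
    _ = 2 ^ (1 / 4 : ℝ) * M ^ (1 / 2 : ℝ) := by
      rw [Real.mul_rpow zero_le_two (sq_nonneg M), ← Real.rpow_natCast,
        ← Real.rpow_mul (by positivity)]
      norm_num
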